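/- Let P_s be a sign pattern on n nodes and let V_C ⊆ V be a negative signed zero forcing set of P_s. Then for every A ∈ Q_s(P_s), every real λ < 0, and every ν ∈ ℝ^n with ν^T A = λ ν^T and ν_j = 0 for all j ∈ V_C, one has ν = 0. By the PBH test, this means every negative eigenvalue of every A ∈ Q_s(P_s) is a controllable eigenvalue of the pair (A, B), where B has columns e_j for j ∈ V_C. -/
import Mathlib


/-- An entry of a sign pattern: `+`, `-`, `0`, or `?` (unrestricted). -/
inductive SignPatEntry : Type
  | pos | neg | zero | unk
deriving DecidableEq

namespace SignPatEntry

/-- Sign inversion: `inv(+) = -`, `inv(-) = +`. -/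
def inv : SignPatEntry → SignPatEntry
  | pos => neg
  | neg => pos
  | zero => zero
  | unk => unk

/-- Product of signs (used as `s · P(u,v)`). -/
def mul : SignPatEntry → SignPatEntry → SignPatEntry
  | pos, y => y
  | neg, y => y.inv
  | zero, _ => zero
  | unk, _ => unk

end SignPatEntry

/-- A real number matches a sign-pattern entry. -/
def matchesSign : SignPatEntry → ℝ → Prop
  | .pos, a => 0 < a
  | .neg, a => a < 0
  | .zero, a => a = 0
  | .unk, _ => True

/-- The qualitative class of a sign pattern: real matrices whose entries have
the prescribed signs. -/
def QClass {n : ℕ} (P : Fin n → Fin n → SignPatEntry)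
    (A : Matrix (Fin n) (Fin n) ℝ) : Prop :=
  ∀ i j : Fin n, matchesSign (P i j) (A i j)

/-- A configuration of the signing-and-coloring game: a set of black nodes and a
partial marking of nodes with signs. -/
structure Config (n : ℕ) where
  black : Finset (Fin n)
  mark : Fin n → Option SignPatEntry

/-- The set of white out-neighbors of `v` (out-neighbors of `v` are the `u` with
`P u v ≠ 0`). -/
def Wset {n : ℕ} (P : Fin n → Fin n → SignPatEntry) (c : Config n) (v : Fin n) :
    Finset (Fin n) :=
  Finset.univ.filter (fun u => u ∉ c.black ∧ P u v ≠ SignPatEntry.zero)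

/-- One step of the signing and coloring rule, played on the pattern `P`. -/
inductive Step {n : ℕ} (P : Fin n → Fin n → SignPatEntry) : Config n → Config n → Prop
  /-- (1) a pivot node `v` with a single white out-neighbor `u` forces `u` black. -/
  | force1 (c : Config n) (v u : Fin n)
      (hv : v ∈ c.black ∨ P v v ≠ SignPatEntry.unk)
      (hW : Wset P c v = {u}) :
      Step P c ⟨insert u c.black, c.mark⟩
  /-- (2) if all white out-neighbors of a pivot `v` are marked consistently
  (all with `m(u) = P(u,v)` or all with `m(u) = -P(u,v)`), they all become black. -/
  | force2 (c : Config n) (v : Fin n)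
      (hv : v ∈ c.black ∨ P v v ≠ SignPatEntry.unk)
      (hall : (∀ u ∈ Wset P c v, c.mark u = some (P u v)) ∨
              (∀ u ∈ Wset P c v, c.mark u = some (P u v).inv)) :
      Step P c ⟨c.black ∪ Wset P c v, c.mark⟩
  /-- (3) if exactly one white out-neighbor `w` of a pivot `v` is unmarked, at least one
  is marked, and every marked one satisfies `m(u) = s · P(u,v)`, then `w` gets
  marked with `-s · P(w,v)`. -/
  | force3 (c : Config n) (v w : Fin n) (s : SignPatEntry)
      (hv : v ∈ c.black ∨ P v v ≠ SignPatEntry.unk)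
      (hs : s = SignPatEntry.pos ∨ s = SignPatEntry.neg)
      (hw : w ∈ Wset P c v) (hwnone : c.mark w = none)
      (hmarked : ∀ u ∈ Wset P c v, u ≠ w → c.mark u = some (s.mul (P u v)))
      (hex : ∃ u ∈ Wset P c v, u ≠ w) :
      Step P c ⟨c.black, Function.update c.mark w (some (s.inv.mul (P w v)))⟩
  /-- (4) if no white node is marked, an arbitrary white node may be marked `+`. -/
  | force4 (c : Config n) (u : Fin n)
      (hnomark : ∀ x : Fin n, x ∉ c.black → c.mark x = none)
      (hu : u ∉ c.black) :
      Step P c ⟨c.black, Function.update c.mark u (some SignPatEntry.pos)⟩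

/-- The initial configuration: black set `Z`, no marks. -/
def initConfig {n : ℕ} (Z : Finset (Fin n)) : Config n := ⟨Z, fun _ => none⟩

/-- `Z` is a signed zero forcing set of the pattern `P`. -/
def SignedZFS {n : ℕ} (P : Fin n → Fin n → SignPatEntry) (Z : Finset (Fin n)) : Prop :=
  ∃ c : Config n, Relation.ReflTransGen (Step P) (initConfig Z) c ∧ c.black = Finset.univ

/-- The negative looped pattern `P⁻`: off-diagonal as `P`; diagonal `-` if
`P i i ∈ {0,-}`, and `?` if `P i i ∈ {+,?}`. -/
def negLooped {n : ℕ} (P : Fin n → Fin n → SignPatEntry) :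
    Fin n → Fin n → SignPatEntry := fun i j =>
  if i = j then
    (match P i i with
      | SignPatEntry.zero => SignPatEntry.neg
      | SignPatEntry.neg => SignPatEntry.neg
      | _ => SignPatEntry.unk)
  else P i j

/-- The positive looped pattern `P⁺`: off-diagonal as `P`; diagonal `+` if
`P i i ∈ {0,+}`, and `?` if `P i i ∈ {-,?}`. -/
def posLooped {n : ℕ} (P : Fin n → Fin n → SignPatEntry) :
    Fin n → Fin n → SignPatEntry := fun i j =>
  if i = j then
    (match P i i with
      | SignPatEntry.zero => SignPatEntry.pos
      | SignPatEntry.pos => SignPatEntry.pos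
      | _ => SignPatEntry.unk)
  else P i j

/-- The sign of a real number, as a sign-pattern entry. -/
noncomputable def sgnR (x : ℝ) : SignPatEntry :=
  if 0 < x then SignPatEntry.pos else if x < 0 then SignPatEntry.neg else SignPatEntry.zero

-- auxiliary lemmas
lemma aux_matchesSign_inv {e : SignPatEntry} {x : ℝ} :
    matchesSign e.inv x ↔ matchesSign e (-x) := by
  cases e <;> simp [SignPatEntry.inv, matchesSign]

lemma aux_ne_zero {e : SignPatEntry} (h0 : e ≠ SignPatEntry.zero)
    (h1 : e ≠ SignPatEntry.unk) {b : ℝ} (hb : matchesSign e b) : b ≠ 0 := by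
  cases e with
  | pos => exact ne_of_gt hb
  | neg => exact ne_of_lt hb
  | zero => exact absurd rfl h0
  | unk => exact absurd rfl h1

lemma aux_mul_pos {e : SignPatEntry} (h0 : e ≠ SignPatEntry.zero)
    (h1 : e ≠ SignPatEntry.unk) {x y : ℝ}
    (hx : matchesSign e x) (hy : matchesSign e y) : 0 < x * y := by
  cases e with
  | pos => exact mul_pos hx hy
  | neg => exact mul_pos_of_neg_of_neg hx hy
  | zero => exact absurd rfl h0
  | unk => exact absurd rfl h1

lemma aux_of_nonpos {e : SignPatEntry} (h0 : e ≠ SignPatEntry.zero)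
    (h1 : e ≠ SignPatEntry.unk) {x b : ℝ}
    (hb : matchesSign e b) (hx : x ≠ 0) (hxb : x * b ≤ 0) :
    matchesSign e (-x) := by
  cases e with
  | pos =>
      have hbp : 0 < b := hb
      show 0 < -x
      rcases hx.lt_or_gt with h | h
      · linarith
      · nlinarith
  | neg =>
      have hbp : b < 0 := hb
      show -x < 0
      rcases hx.lt_or_gt with h | h
      · nlinarith
      · linarith
  | zero => exact absurd rfl h0
  | unk => exact absurd rfl h1

def InvCfg {n : ℕ} (ν : Fin n → ℝ) (c : Config n) : Prop :=
  (∀ u ∈ c.black, ν u = 0) ∧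
  ∃ σ : ℝ, (σ = 1 ∨ σ = -1) ∧
    ∀ u e, c.mark u = some e → ν u = 0 ∨ matchesSign e (σ * ν u)

lemma aux_Wset_sign {n : ℕ} {Q : Fin n → Fin n → SignPatEntry}
    (hoff : ∀ i j : Fin n, i ≠ j → Q i j ≠ SignPatEntry.unk)
    {c : Config n} {v u : Fin n}
    (hv : v ∈ c.black ∨ Q v v ≠ SignPatEntry.unk)
    (hu : u ∈ Wset Q c v) :
    Q u v ≠ SignPatEntry.zero ∧ Q u v ≠ SignPatEntry.unk := by
  simp only [Wset, Finset.mem_filter, Finset.mem_univ, true_and] at hu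
  refine ⟨hu.2, ?_⟩
  by_cases h : u = v
  · subst h
    rcases hv with h | h
    · exact absurd h hu.1
    · exact h
  · exact hoff u v h

lemma aux_sum_W {n : ℕ} (Q : Fin n → Fin n → SignPatEntry)
    (B : Matrix (Fin n) (Fin n) ℝ) (hB : QClass Q B)
    (ν : Fin n → ℝ) (hν : Matrix.vecMul ν B = 0)
    (c : Config n) (hblack : ∀ u ∈ c.black, ν u = 0) (v : Fin n) :
    ∑ u ∈ Wset Q c v, ν u * B u v = 0 := by
  have h0 : ∑ u : Fin n, ν u * B u v = 0 := by
    have h := congrFun hν v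
    simpa [Matrix.vecMul, dotProduct] using h
  rw [← h0]
  apply Finset.sum_subset (Finset.subset_univ _)
  intro x _ hx
  simp only [Wset, Finset.mem_filter, Finset.mem_univ, true_and] at hx
  push_neg at hx
  by_cases hb : x ∈ c.black
  · rw [hblack x hb, zero_mul]
  · have hz : B x v = 0 := by
      have h := hB x v
      rw [hx hb] at h
      exact h
    rw [hz, mul_zero]

lemma aux_force3_core {n : ℕ} {Q : Fin n → Fin n → SignPatEntry}
    (hoff : ∀ i j : Fin n, i ≠ j → Q i j ≠ SignPatEntry.unk)
    {B : Matrix (Fin n) (Fin n) ℝ} (hB : QClass Q B)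
    {ν : Fin n → ℝ} (hν : Matrix.vecMul ν B = 0)
    {c : Config n} (hblack : ∀ u ∈ c.black, ν u = 0) {v : Fin n}
    (hv : v ∈ c.black ∨ Q v v ≠ SignPatEntry.unk) {w : Fin n}
    (hw : w ∈ Wset Q c v) (τ : ℝ) (hτ : τ = 1 ∨ τ = -1)
    (hτm : ∀ x ∈ Wset Q c v, x ≠ w → ν x = 0 ∨ matchesSign (Q x v) (τ * ν x))
    (hν0 : ν w ≠ 0) :
    matchesSign (Q w v) (-(τ * ν w)) := by
  have hsumW := aux_sum_W Q B hB ν hν c hblack v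
  have hnn : ∀ x ∈ (Wset Q c v).erase w, 0 ≤ τ * (ν x * B x v) := by
    intro x hx
    rw [Finset.mem_erase] at hx
    rcases hτm x hx.2 hx.1 with h | h
    · rw [h]; simp
    · have hs := aux_Wset_sign hoff hv hx.2
      have h2 := aux_mul_pos hs.1 hs.2 h (hB x v)
      rw [mul_assoc] at h2
      exact le_of_lt h2
  have hse : ∑ x ∈ (Wset Q c v).erase w, ν x * B x v + ν w * B w v = 0 := by
    rw [Finset.sum_erase_add _ _ hw, hsumW]
  have hge : 0 ≤ ∑ x ∈ (Wset Q c v).erase w, τ * (ν x * B x v) :=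
    Finset.sum_nonneg hnn
  rw [← Finset.mul_sum] at hge
  have hwe : ν w * B w v = -∑ x ∈ (Wset Q c v).erase w, ν x * B x v := by linarith
  have hle : (τ * ν w) * B w v ≤ 0 := by
    rw [mul_assoc, hwe, mul_neg]
    linarith
  have hs := aux_Wset_sign hoff hv hw
  have hx0 : τ * ν w ≠ 0 :=
    mul_ne_zero (by rcases hτ with h | h <;> rw [h] <;> norm_num) hν0
  exact aux_of_nonpos hs.1 hs.2 (hB w v) hx0 hle

lemma aux_step_inv {n : ℕ} (Q : Fin n → Fin n → SignPatEntry)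
    (hoff : ∀ i j : Fin n, i ≠ j → Q i j ≠ SignPatEntry.unk)
    (B : Matrix (Fin n) (Fin n) ℝ) (hB : QClass Q B)
    (ν : Fin n → ℝ) (hν : Matrix.vecMul ν B = 0)
    {c c' : Config n} (h : Step Q c c') (hI : InvCfg ν c) : InvCfg ν c' := by
  cases h with
  | force1 v u hv hW =>
      obtain ⟨hblack, hmark⟩ := hI
      refine ⟨?_, hmark⟩
      intro x hx
      rw [Finset.mem_insert] at hx
      rcases hx with rfl | hx
      · have hsumW := aux_sum_W Q B hB ν hν c hblack v
        rw [hW, Finset.sum_singleton] at hsumW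
        have hu : x ∈ Wset Q c v := by rw [hW]; exact Finset.mem_singleton_self x
        have hs := aux_Wset_sign hoff hv hu
        have hBne := aux_ne_zero hs.1 hs.2 (hB x v)
        exact (mul_eq_zero.mp hsumW).resolve_right hBne
      · exact hblack x hx
  | force2 v hv hall =>
      obtain ⟨hblack, σ, hσ, hm⟩ := hI
      refine ⟨?_, σ, hσ, hm⟩
      intro u hu
      rw [Finset.mem_union] at hu
      rcases hu with hu | hu
      · exact hblack u hu
      obtain ⟨τ, hτ, hτm⟩ : ∃ τ : ℝ, (τ = 1 ∨ τ = -1) ∧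
          ∀ x ∈ Wset Q c v, ν x = 0 ∨ matchesSign (Q x v) (τ * ν x) := by
        rcases hall with hall | hall
        · exact ⟨σ, hσ, fun x hx => hm x _ (hall x hx)⟩
        · refine ⟨-σ, ?_, fun x hx => ?_⟩
          · rcases hσ with h | h <;> rw [h] <;> norm_num
          · rcases hm x _ (hall x hx) with h | h
            · exact Or.inl h
            · right
              have h2 := aux_matchesSign_inv.mp h
              rwa [neg_mul]
      have hnn : ∀ x ∈ Wset Q c v, 0 ≤ τ * (ν x * B x v) := by
        intro x hx
        rcases hτm x hx with h | h
        · rw [h]; simp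
        · have hs := aux_Wset_sign hoff hv hx
          have h2 := aux_mul_pos hs.1 hs.2 h (hB x v)
          rw [mul_assoc] at h2
          exact le_of_lt h2
      have hsum0 : ∑ x ∈ Wset Q c v, τ * (ν x * B x v) = 0 := by
        rw [← Finset.mul_sum, aux_sum_W Q B hB ν hν c hblack v, mul_zero]
      have hz := (Finset.sum_eq_zero_iff_of_nonneg hnn).mp hsum0 u hu
      have hτ0 : τ ≠ 0 := by rcases hτ with h | h <;> rw [h] <;> norm_num
      have hs := aux_Wset_sign hoff hv hu
      have hBne := aux_ne_zero hs.1 hs.2 (hB u v)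
      have := (mul_eq_zero.mp hz).resolve_left hτ0
      exact (mul_eq_zero.mp this).resolve_right hBne
  | force3 v w s hv hs hw hwnone hmarked hex =>
      obtain ⟨hblack, σ, hσ, hm⟩ := hI
      refine ⟨hblack, σ, hσ, ?_⟩
      intro u e he
      replace he : Function.update c.mark w (some (s.inv.mul (Q w v))) u = some e := he
      by_cases huw : u = w
      · subst huw
        rw [Function.update_self] at he
        injection he with he
        subst he
        by_cases hν0 : ν u = 0
        · exact Or.inl hν0
        right
        rcases hs with rfl | rfl
        · -- s = pos : mark is (Q u v).inv ; τ = σ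
          have hτm : ∀ x ∈ Wset Q c v, x ≠ u → ν x = 0 ∨ matchesSign (Q x v) (σ * ν x) := by
            intro x hx hxu
            have := hm x _ (hmarked x hx hxu)
            simpa [SignPatEntry.mul] using this
          have hcore := aux_force3_core hoff hB hν hblack hv hw σ hσ hτm hν0
          show matchesSign (Q u v).inv (σ * ν u)
          rw [aux_matchesSign_inv]
          exact hcore
        · -- s = neg : mark is Q u v ; τ = -σ
          have hτm : ∀ x ∈ Wset Q c v, x ≠ u → ν x = 0 ∨ matchesSign (Q x v) (-σ * ν x) := by
            intro x hx hxu
            rcases hm x _ (hmarked x hx hxu) with h | h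
            · exact Or.inl h
            right
            have : matchesSign (Q x v).inv (σ * ν x) := by
              simpa [SignPatEntry.mul] using h
            have h2 := aux_matchesSign_inv.mp this
            rwa [neg_mul]
          have hσ' : (-σ : ℝ) = 1 ∨ (-σ : ℝ) = -1 := by
            rcases hσ with h | h <;> rw [h] <;> norm_num
          have hcore := aux_force3_core hoff hB hν hblack hv hw (-σ) hσ' hτm hν0
          show matchesSign (Q u v) (σ * ν u)
          have : -(-σ * ν u) = σ * ν u := by ring
          rwa [this] at hcore
      · rw [Function.update_of_ne huw] at he
        exact hm u e he
  | force4 u hnomark hu =>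
      obtain ⟨hblack, _⟩ := hI
      refine ⟨hblack, if ν u < 0 then -1 else 1, by split_ifs <;> simp, ?_⟩
      intro x e he
      replace he : Function.update c.mark u (some SignPatEntry.pos) x = some e := he
      by_cases hxu : x = u
      · subst hxu
        rw [Function.update_self] at he
        injection he with he
        subst he
        by_cases h0 : ν x = 0
        · exact Or.inl h0
        right
        show (0:ℝ) < (if ν x < 0 then (-1:ℝ) else 1) * ν x
        rcases (Ne.lt_or_gt h0 : ν x < 0 ∨ 0 < ν x) with h | h
        · rw [if_pos h, neg_one_mul]; linarith
        · rw [if_neg (not_lt.mpr h.le), one_mul]; exact h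
      · rw [Function.update_of_ne hxu] at he
        by_cases hb : x ∈ c.black
        · exact Or.inl (hblack x hb)
        · rw [hnomark x hb] at he; cases he

lemma aux_main {n : ℕ} (Q : Fin n → Fin n → SignPatEntry)
    (hoff : ∀ i j : Fin n, i ≠ j → Q i j ≠ SignPatEntry.unk)
    (Z : Finset (Fin n)) (hZ : SignedZFS Q Z)
    (B : Matrix (Fin n) (Fin n) ℝ) (hB : QClass Q B)
    (ν : Fin n → ℝ) (hν : Matrix.vecMul ν B = 0)
    (hZ0 : ∀ j ∈ Z, ν j = 0) : ν = 0 := by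
  obtain ⟨c, hreach, hall⟩ := hZ
  have hInv : ∀ c' : Config n,
      Relation.ReflTransGen (Step Q) (initConfig Z) c' → InvCfg ν c' := by
    intro c' h
    induction h with
    | refl =>
        refine ⟨hZ0, 1, Or.inl rfl, fun u e he => ?_⟩
        cases he
    | tail _ h2 ih => exact aux_step_inv Q hoff B hB ν hν h2 ih
  funext x
  exact (hInv c hreach).1 x (by rw [hall]; exact Finset.mem_univ x)


/-- If `V_C` is a negative signed zero forcing set of `P_s` (i.e. a signed
zero forcing set of the positive looped pattern `P_s⁺`), then every real left eigenvector
of any `A ∈ Q_s(P_s)` for a negative eigenvalue vanishing on `V_C` is zero; equivalently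
(PBH test), every negative eigenvalue of every `A ∈ Q_s(P_s)` is controllable for the
input set `V_C`. -/
theorem stmt4 {n : ℕ} (P : Fin n → Fin n → SignPatEntry)
    (hP : ∀ i j : Fin n, i ≠ j → P i j ≠ SignPatEntry.unk)
    (VC : Finset (Fin n)) (hVC : SignedZFS (posLooped P) VC) :
    (∀ A : Matrix (Fin n) (Fin n) ℝ, QClass P A →
      ∀ lam : ℝ, lam < 0 → ∀ ν : Fin n → ℝ,
        Matrix.vecMul ν A = lam • ν → (∀ j ∈ VC, ν j = 0) → ν = 0) ∧
    (∀ A : Matrix (Fin n) (Fin n) ℝ, QClass P A →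
      ∀ lam : ℝ, lam < 0 → ∀ w : Fin n → ℂ, w ≠ 0 →
        Matrix.vecMul w (A.map (Complex.ofReal ·)) = (lam : ℂ) • w →
        ∃ j ∈ VC, w j ≠ 0) := by
  have hoff : ∀ i j : Fin n, i ≠ j → posLooped P i j ≠ SignPatEntry.unk := by
    intro i j hij
    simp only [posLooped, if_neg hij]
    exact hP i j hij
  have part1 : ∀ A : Matrix (Fin n) (Fin n) ℝ, QClass P A →
      ∀ lam : ℝ, lam < 0 → ∀ ν : Fin n → ℝ,
        Matrix.vecMul ν A = lam • ν → (∀ j ∈ VC, ν j = 0) → ν = 0 := by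
    intro A hA lam hlam ν hvm hz
    set B := A - lam • (1 : Matrix (Fin n) (Fin n) ℝ) with hBdef
    have hBQ : QClass (posLooped P) B := by
      intro i j
      by_cases hij : i = j
      · subst hij
        have hAii := hA i i
        have hBii : B i i = A i i - lam := by
          simp [hBdef, Matrix.one_apply]
        simp only [posLooped, if_pos rfl]
        cases hPi : P i i with
        | pos =>
            rw [hPi] at hAii
            show 0 < B i i
            rw [hBii]
            have h : (0:ℝ) < A i i := hAii
            linarith
        | zero =>
            rw [hPi] at hAii
            show 0 < B i i
            rw [hBii]
            have h : A i i = 0 := hAii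
            linarith
        | neg => trivial
        | unk => trivial
      · have hpl : posLooped P i j = P i j := by simp only [posLooped, if_neg hij]
        rw [hpl]
        have hBij : B i j = A i j := by
          simp [hBdef, Matrix.one_apply, hij]
        rw [hBij]
        exact hA i j
    have hνB : Matrix.vecMul ν B = 0 := by
      have h1 : Matrix.vecMul ν (lam • (1 : Matrix (Fin n) (Fin n) ℝ)) = lam • ν := by
        funext j
        simp only [Matrix.vecMul, dotProduct, Matrix.smul_apply, Matrix.one_apply,
          smul_eq_mul, mul_ite, mul_one, mul_zero, Finset.sum_ite_eq, Finset.sum_ite_eq',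
          Finset.mem_univ, if_true, Pi.smul_apply]
        ring
      rw [hBdef, Matrix.vecMul_sub, h1, hvm, sub_self]
    exact aux_main _ hoff VC hVC B hBQ ν hνB hz
  refine ⟨part1, ?_⟩
  intro A hA lam hlam w hw hvm
  by_contra hcon
  push_neg at hcon
  have hre : Matrix.vecMul (fun i => (w i).re) A = lam • (fun i => (w i).re) := by
    funext j
    have h := congrFun hvm j
    simp only [Matrix.vecMul, dotProduct, Matrix.map_apply, Pi.smul_apply,
      smul_eq_mul] at h ⊢
    have h2 := congrArg Complex.re h
    rw [Complex.re_sum] at h2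
    simpa [Complex.mul_re] using h2
  have him : Matrix.vecMul (fun i => (w i).im) A = lam • (fun i => (w i).im) := by
    funext j
    have h := congrFun hvm j
    simp only [Matrix.vecMul, dotProduct, Matrix.map_apply, Pi.smul_apply,
      smul_eq_mul] at h ⊢
    have h2 := congrArg Complex.im h
    rw [Complex.im_sum] at h2
    simpa [Complex.mul_im] using h2
  have hre0 := part1 A hA lam hlam _ hre (fun j hj => by rw [hcon j hj]; simp)
  have him0 := part1 A hA lam hlam _ him (fun j hj => by rw [hcon j hj]; simp)
  apply hw
  funext i
  have h1 : (w i).re = 0 := congrFun hre0 i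
  have h2 : (w i).im = 0 := congrFun him0 i
  apply Complex.ext
  · simpa using h1
  · simpa using h2
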